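/- arXiv:math/0608228 — 3 statements merged into one kernel-verified Lean document; each statement's English description precedes it below -/
import Mathlib

section
/- Let A be a small abelian category with enough projective objects. Then the canonical embedding A \to Ind(A) carries projective objects of A to projective objects of Ind(A), and Ind(A) has enough projectives: every object of Ind(A) admits an epimorphism from a projective object. -/
/-!
A morphism `g : W ⟶ Z` of ind-objects is presented by a natural transformation `φ : F₁ ⟶ F₂`
of filtered diagrams in `A`. If `g` is an epimorphism, the maps `Z ⟶ colim y(coker φ)` induced
by the cokernel projection and by `0` agree, since they agree after `g`. So every element of
`Z` living at a stage `i` of `F₂` dies in `coker φ` at a later stage `k`, and exactness of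
`F₁ k ⟶ F₂ k ⟶ coker φₖ` lifts it to `W` up to an epimorphism `π : b ⟶ a` of `A`: epimorphisms
of ind-objects are surjective up to refinements on representables. Splitting `π` when `a` is
projective shows that `y a` is projective. Finally an ind-object `X = colim y(F i)` is covered
by `∐ y(Pᵢ)`, where `Pᵢ ⟶ F i` are projective covers in `A`, because `y` preserves epimorphisms.
-/

open CategoryTheory Limits Opposite

universe v u

namespace CategoryTheory

abbrev indYoneda (C : Type u) [Category.{v} C] :
    C ⥤ ObjectProperty.FullSubcategory (IsIndObject (C := C)) :=
  ObjectProperty.lift _ yoneda isIndObject_yoneda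

instance {C : Type u} [Category.{v} C] {a b : C} (π : b ⟶ a) [Epi π] :
    Epi ((indYoneda C).map π) :=
  (Ind.equivalence C).inverse.epi_of_epi_map (inferInstanceAs (Epi (Ind.yoneda.map π)))

section ColimitOfRepresentables

variable {C : Type u} [Category.{v} C] {I : Type v} [SmallCategory I] {G : I ⥤ C}
  {c : Cocone (G ⋙ yoneda)}

lemma exists_yoneda_map_comp_ι_eq (hc : IsColimit c) {a : C} (x : yoneda.obj a ⟶ c.pt) :
    ∃ (j : I) (e : a ⟶ G.obj j), yoneda.map e ≫ c.ι.app j = x := by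
  obtain ⟨j, e, he⟩ := Types.jointly_surjective _
    (isColimitOfPreserves ((evaluation Cᵒᵖ (Type v)).obj (op a)) hc) (yonedaEquiv x)
  exact ⟨j, e, yonedaEquiv.injective (by rwa [yonedaEquiv_comp, yonedaEquiv_yoneda_map])⟩

lemma exists_map_eq_of_yoneda_map_comp_ι_eq [IsFiltered I] (hc : IsColimit c) {a : C}
    {j j' : I} {e : a ⟶ G.obj j} {e' : a ⟶ G.obj j'}
    (h : yoneda.map e ≫ c.ι.app j = yoneda.map e' ≫ c.ι.app j') :
    ∃ (k : I) (t : j ⟶ k) (t' : j' ⟶ k), e ≫ G.map t = e' ≫ G.map t' := by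
  have h' := congrArg yonedaEquiv h
  rw [yonedaEquiv_comp, yonedaEquiv_yoneda_map, yonedaEquiv_comp, yonedaEquiv_yoneda_map] at h'
  exact (Types.FilteredColimit.isColimit_eq_iff _
    (isColimitOfPreserves ((evaluation Cᵒᵖ (Type v)).obj (op a)) hc)).mp h'

end ColimitOfRepresentables

namespace IndParallelPairPresentation

variable {C : Type u} [Category.{v} C] {W Z : Cᵒᵖ ⥤ Type v} {f g : W ⟶ Z}
  (P : IndParallelPairPresentation f g)

@[simp]
lemma ι₁_app_comp_isColimit₁_map {Q : P.I ⥤ C} (d : Cocone (Q ⋙ yoneda))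
    (α : P.F₁ ⋙ yoneda ⟶ Q ⋙ yoneda) (i : P.I) :
    P.ι₁.app i ≫ P.isColimit₁.map d α = α.app i ≫ d.ι.app i :=
  P.isColimit₁.ι_map d α i

@[simp]
lemma ι₂_app_comp_isColimit₂_map {Q : P.I ⥤ C} (d : Cocone (Q ⋙ yoneda))
    (α : P.F₂ ⋙ yoneda ⟶ Q ⋙ yoneda) (i : P.I) :
    P.ι₂.app i ≫ P.isColimit₂.map d α = α.app i ≫ d.ι.app i :=
  P.isColimit₂.ι_map d α i

lemma ι₁_app_comp_left (i : P.I) : P.ι₁.app i ≫ f = yoneda.map (P.φ.app i) ≫ P.ι₂.app i := by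
  have h := P.isColimit₁.ι_map ⟨Z, P.ι₂⟩ (Functor.whiskerRight P.φ yoneda) i
  rwa [← P.hf] at h

lemma left_comp_isColimit₂_map {Q : P.I ⥤ C} (d : Cocone (Q ⋙ yoneda)) (α : P.F₂ ⟶ Q) :
    f ≫ P.isColimit₂.map d (Functor.whiskerRight α yoneda) =
      P.isColimit₁.map d (Functor.whiskerRight (P.φ ≫ α) yoneda) :=
  P.isColimit₁.hom_ext fun i => by
    rw [← Category.assoc, ι₁_app_comp_left]
    simp

end IndParallelPairPresentation

section Abelian

variable {C : Type u} [Category.{v} C] [Abelian C]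
  {W Z : ObjectProperty.FullSubcategory (IsIndObject (C := C))}

lemma IndParallelPairPresentation.exists_map_comp_cokernel_π_app_eq_zero (f : W ⟶ Z) [Epi f]
    (P : IndParallelPairPresentation f.hom f.hom) (i : P.I) :
    ∃ (k : P.I) (t : i ⟶ k), P.F₂.map t ≫ (cokernel.π P.φ).app k = 0 := by
  let d := colimit.cocone (cokernel P.φ ⋙ yoneda)
  let V : ObjectProperty.FullSubcategory (IsIndObject (C := C)) :=
    ⟨d.pt, isIndObject_colimit _ _ fun _ => isIndObject_yoneda _⟩
  let toV (α : P.F₂ ⟶ cokernel P.φ) : Z ⟶ V :=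
    ObjectProperty.homMk (P.isColimit₂.map d (Functor.whiskerRight α yoneda))
  have hπ : toV (cokernel.π P.φ) = toV 0 := by
    rw [← cancel_epi f]
    ext1
    simp only [toV, ObjectProperty.FullSubcategory.comp_hom, ObjectProperty.homMk_hom,
      P.left_comp_isColimit₂_map, cokernel.condition, comp_zero]
  have h := P.ι₂.app i ≫= congrArg (fun g : Z ⟶ V => g.hom) hπ
  simp only [toV, ObjectProperty.homMk_hom, P.ι₂_app_comp_isColimit₂_map,
    Functor.whiskerRight_app] at h
  obtain ⟨k, t, _, hk⟩ := exists_map_eq_of_yoneda_map_comp_ι_eq (colimit.isColimit _) h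
  exact ⟨k, t, by simpa using hk⟩

lemma surjective_up_to_refinements_of_epi_of_isIndObject (g : W ⟶ Z) [Epi g] {a : C}
    (x : (indYoneda C).obj a ⟶ Z) :
    ∃ (b : C) (π : b ⟶ a) (_ : Epi π) (w : (indYoneda C).obj b ⟶ W),
      w ≫ g = (indYoneda C).map π ≫ x := by
  obtain ⟨P⟩ := nonempty_indParallelPairPresentation W.2 Z.2 g.hom g.hom
  obtain ⟨i, e, hx⟩ := exists_yoneda_map_comp_ι_eq P.isColimit₂ x.hom
  obtain ⟨k, t, ht⟩ := P.exists_map_comp_cokernel_π_app_eq_zero g i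
  have hk : IsColimit (CokernelCofork.ofπ ((cokernel.π P.φ).app k)
      (by simp [← NatTrans.comp_app] : P.φ.app k ≫ (cokernel.π P.φ).app k = 0)) :=
    CokernelCofork.mapIsColimit _ (cokernelIsCokernel P.φ) ((evaluation P.I C).obj k)
  obtain ⟨b, π, hπ, x₁, fac⟩ :=
    (CokernelCofork.IsColimit.comp_π_eq_zero_iff_up_to_refinements hk (e ≫ P.F₂.map t)).1
      (by simpa using e ≫= ht)
  refine ⟨b, π, hπ, ObjectProperty.homMk (yoneda.map x₁ ≫ P.ι₁.app k), ?_⟩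
  have hι₂ : yoneda.map (P.F₂.map t) ≫ P.ι₂.app k = P.ι₂.app i :=
    (P.ι₂.naturality t).trans (Category.comp_id _)
  ext1
  simp only [ObjectProperty.FullSubcategory.comp_hom, ObjectProperty.homMk_hom,
    ObjectProperty.lift_map, Category.assoc, P.ι₁_app_comp_left, ← hx]
  rw [← Functor.map_comp_assoc, ← fac]
  simp only [Functor.map_comp, Category.assoc, hι₂]

instance (P : C) [Projective P] : Projective ((indYoneda C).obj P) where
  factors {_ _} x e _ := by
    obtain ⟨b, π, _, w, hw⟩ := surjective_up_to_refinements_of_epi_of_isIndObject e x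
    refine ⟨(indYoneda C).map (Projective.factorThru (𝟙 P) π) ≫ w, ?_⟩
    rw [Category.assoc, hw, ← Functor.map_comp_assoc, Projective.factorThru_comp, Functor.map_id,
      Category.id_comp]

end Abelian

lemma exists_projective_epi_of_isIndObject {C : Type u} [SmallCategory C] [Abelian C]
    [EnoughProjectives C] (X : ObjectProperty.FullSubcategory (IsIndObject (C := C))) :
    ∃ (P : ObjectProperty.FullSubcategory (IsIndObject (C := C))) (f : P ⟶ X),
      Projective P ∧ Epi f := by
  let p := X.2.presentation
  have : HasColimitsOfShape (Discrete p.I)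
      (ObjectProperty.FullSubcategory (IsIndObject (C := C))) :=
    Adjunction.hasColimitsOfShape_of_equivalence (Ind.equivalence C).inverse
  refine ⟨∐ fun i => (indYoneda C).obj (Projective.over (p.F.obj i)),
    Limits.Sigma.desc fun i =>
      (indYoneda C).map (Projective.π _) ≫ ObjectProperty.homMk (p.cocone.ι.app i),
    inferInstance, ⟨fun {V} g g' h => ?_⟩⟩
  ext1
  refine p.coconeIsColimit.hom_ext fun i => ?_
  have hi := Limits.Sigma.ι _ i ≫= h
  simp only [Limits.Sigma.ι_desc_assoc, Category.assoc, cancel_epi] at hi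
  exact congrArg (fun g : (indYoneda C).obj (p.F.obj i) ⟶ V => g.hom) hi

end CategoryTheory

/-- Let `A` be a small abelian category with enough projectives.  Then the canonical (Yoneda)
embedding of `A` into its Ind-completion `Ind(A)` carries projective objects of `A` to
projective objects of `Ind(A)`, and `Ind(A)` has enough projectives: every object of `Ind(A)`
admits an epimorphism from a projective object. -/
theorem ind_of_abelian_enough_projectives
    (A : Type u) [SmallCategory A] [Abelian A] [EnoughProjectives A] :
    (∀ P : A, Projective P →
      Projective ((ObjectProperty.lift (IsIndObject (C := A)) yoneda isIndObject_yoneda).obj P)) ∧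
    ∀ X : ObjectProperty.FullSubcategory (IsIndObject (C := A)),
      ∃ (P : ObjectProperty.FullSubcategory (IsIndObject (C := A))) (f : P ⟶ X), Projective P ∧ Epi f :=
  ⟨fun _ _ => inferInstance, exists_projective_epi_of_isIndObject⟩
end

section
/- Let A be an abelian category, let P be a chain complex in A such that each P_n is projective and P_n = 0 for all sufficiently small n, and let f: Q \to Q' be a quasi-isomorphism of chain complexes in A. Then composition with f induces a bijection [P, Q] \to [P, Q'] on sets of chain homotopy classes of chain maps. -/
/-!
Reindexing along `n ↦ -n` identifies chain complexes indexed by `ℤ` with cochain complexes,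
compatibly with homotopies and with homology. It turns `P` into a bounded above cochain complex
of projectives, which is K-projective: it is left orthogonal to the acyclic complexes in the
triangulated homotopy category. Such an object is colocal for the morphisms whose cone is
acyclic, i.e. for the quasi-isomorphisms, which is the claimed bijectivity.
-/

open CategoryTheory Limits HomologicalComplex

universe v u

section Restriction

variable {C : Type*} [Category C] {ι ι' : Type*} {c : ComplexShape ι} {c' : ComplexShape ι'}
  (e : c.Embedding c') [e.IsRelIff]

def Homotopy.restriction [Preadditive C] {K L : HomologicalComplex C c'} {φ ψ : K ⟶ L}
    (H : Homotopy φ ψ) (hnext : ∀ i, c'.next (e.f i) = e.f (c.next i))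
    (hprev : ∀ i, c'.prev (e.f i) = e.f (c.prev i)) :
    Homotopy (restrictionMap φ e) (restrictionMap ψ e) where
  hom i j := H.hom (e.f i) (e.f j)
  zero i j hij := H.zero _ _ (by rwa [e.rel_iff])
  comm i := by
    have := H.comm (e.f i)
    simp only [dNext, prevD, AddMonoidHom.mk'_apply] at this ⊢
    rw [hnext, hprev] at this
    exact this

lemma HomologicalComplex.quasiIso_restrictionMap [HasZeroMorphisms C] [CategoryWithHomology C]
    (hnext : ∀ i, c'.next (e.f i) = e.f (c.next i))
    (hprev : ∀ i, c'.prev (e.f i) = e.f (c.prev i))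
    {K L : HomologicalComplex C c'} (φ : K ⟶ L) [QuasiIso φ] :
    QuasiIso (restrictionMap φ e) := by
  rw [quasiIso_iff]
  intro j
  -- the short complex of `restrictionMap φ e` at `j` is definitionally that of `φ` at `e.f j`
  rw [quasiIsoAt_iff' _ _ j _ rfl rfl]
  exact (quasiIsoAt_iff' φ _ (e.f j) _ (hprev j) (hnext j)).1 inferInstance

end Restriction

namespace ComplexShape

lemma next_embeddingUpIntDownInt_f (i : ℤ) :
    (down ℤ).next (embeddingUpIntDownInt.f i) = embeddingUpIntDownInt.f ((up ℤ).next i) := by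
  simp only [embeddingUpIntDownInt_f, ChainComplex.next, CochainComplex.next]; omega

lemma prev_embeddingUpIntDownInt_f (i : ℤ) :
    (down ℤ).prev (embeddingUpIntDownInt.f i) = embeddingUpIntDownInt.f ((up ℤ).prev i) := by
  simp only [embeddingUpIntDownInt_f, ChainComplex.prev, CochainComplex.prev]; omega

lemma next_embeddingDownIntUpInt_f (i : ℤ) :
    (up ℤ).next (embeddingDownIntUpInt.f i) = embeddingDownIntUpInt.f ((down ℤ).next i) := by
  simp only [embeddingDownIntUpInt_f, CochainComplex.next, ChainComplex.next]; omega

lemma prev_embeddingDownIntUpInt_f (i : ℤ) :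
    (up ℤ).prev (embeddingDownIntUpInt.f i) = embeddingDownIntUpInt.f ((down ℤ).prev i) := by
  simp only [embeddingDownIntUpInt_f, CochainComplex.prev, ChainComplex.prev]; omega

end ComplexShape

namespace HomotopyCategory

variable {C D : Type*} [Category C] [Preadditive C] [Category D] [Preadditive D]
  {ι ι' : Type*} {c : ComplexShape ι} {c' : ComplexShape ι'}

def liftFunctor (F : HomologicalComplex C c ⥤ HomologicalComplex D c')
    (hF : ∀ ⦃K L⦄ ⦃φ ψ : K ⟶ L⦄, Homotopy φ ψ → Homotopy (F.map φ) (F.map ψ)) :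
    HomotopyCategory C c ⥤ HomotopyCategory D c' :=
  CategoryTheory.Quotient.lift _ (F ⋙ quotient D c')
    fun _ _ _ _ ⟨H⟩ => eq_of_homotopy _ _ (hF H)

def liftEquivalence (E : HomologicalComplex C c ≌ HomologicalComplex C c')
    (hF : ∀ ⦃K L⦄ ⦃φ ψ : K ⟶ L⦄, Homotopy φ ψ → Homotopy (E.functor.map φ) (E.functor.map ψ))
    (hG : ∀ ⦃K L⦄ ⦃φ ψ : K ⟶ L⦄, Homotopy φ ψ → Homotopy (E.inverse.map φ) (E.inverse.map ψ)) :
    HomotopyCategory C c ≌ HomotopyCategory C c' :=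
  CategoryTheory.Equivalence.mk (liftFunctor E.functor hF) (liftFunctor E.inverse hG)
    (Quotient.natIsoLift _ (Functor.isoWhiskerRight E.unitIso (quotient C c)))
    (Quotient.natIsoLift _ (Functor.isoWhiskerRight E.counitIso (quotient C c')))

variable (C) in
def cochainComplexEquivalence : HomotopyCategory C (.down ℤ) ≌ HomotopyCategory C (.up ℤ) :=
  liftEquivalence (ChainComplex.cochainComplexEquivalence C)
    (fun _ _ _ _ H => H.restriction _ ComplexShape.next_embeddingUpIntDownInt_f
      ComplexShape.prev_embeddingUpIntDownInt_f)
    (fun _ _ _ _ H => H.restriction _ ComplexShape.next_embeddingDownIntUpInt_f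
      ComplexShape.prev_embeddingDownIntUpInt_f)

end HomotopyCategory

lemma CategoryTheory.Functor.FullyFaithful.bijective_comp_map_iff {C D : Type*} [Category C]
    [Category D] {F : C ⥤ D} (hF : F.FullyFaithful) {X Y Z : C} (h : Y ⟶ Z) :
    Function.Bijective (fun g : F.obj X ⟶ F.obj Y => g ≫ F.map h) ↔
      Function.Bijective (fun g : X ⟶ Y => g ≫ h) := by
  have hcomm : (fun g : F.obj X ⟶ F.obj Y => g ≫ F.map h) ∘ F.map = F.map ∘ (fun g => g ≫ h) :=
    funext fun g => (F.map_comp g h).symm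
  rw [← Function.Bijective.of_comp_iff _ (hF.map_bijective X Y), hcomm,
    Function.Bijective.of_comp_iff' (hF.map_bijective X Z)]

lemma CochainComplex.IsKProjective.bijective_comp_quotient_map {C : Type*} [Category C]
    [Abelian C] {K L L' : CochainComplex C ℤ} [K.IsKProjective] (φ : L ⟶ L') [QuasiIso φ] :
    Function.Bijective (fun g : (HomotopyCategory.quotient C (.up ℤ)).obj K ⟶
      (HomotopyCategory.quotient C (.up ℤ)).obj L => g ≫ (HomotopyCategory.quotient C _).map φ) := by
  have hK := IsKProjective.leftOrthogonal K
  rw [← ObjectProperty.isColocal_trW] at hK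
  refine hK _ ?_
  rw [← HomotopyCategory.quasiIso_eq_trW_subcategoryAcyclic,
    HomotopyCategory.quotient_map_mem_quasiIso_iff, HomologicalComplex.mem_quasiIso_iff]
  infer_instance

/-- Let `A` be an abelian category, `P` a chain complex in `A` (homologically indexed over `ℤ`)
such that each `P_n` is projective and `P_n = 0` for all sufficiently small `n`, and let
`f : Q ⟶ Q'` be a quasi-isomorphism of chain complexes in `A`.  Then composition with `f`
induces a bijection `[P, Q] → [P, Q']` on chain homotopy classes of chain maps. -/
theorem homotopyClasses_comp_quasiIso_bijective
    {A : Type u} [Category.{v} A] [Abelian A]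
    (P Q Q' : HomologicalComplex A (ComplexShape.down ℤ))
    (hproj : ∀ n : ℤ, Projective (P.X n))
    (hbdd : ∃ N : ℤ, ∀ n < N, IsZero (P.X n))
    (f : Q ⟶ Q') (hf : QuasiIso f) :
    Function.Bijective
      (fun g : (HomotopyCategory.quotient A (ComplexShape.down ℤ)).obj P ⟶
          (HomotopyCategory.quotient A (ComplexShape.down ℤ)).obj Q =>
        g ≫ (HomotopyCategory.quotient A (ComplexShape.down ℤ)).map f) := by
  obtain ⟨N, hN⟩ := hbdd
  let e := ComplexShape.embeddingUpIntDownInt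
  have : ∀ n, Projective ((P.restriction e).X n) := fun n => hproj (-n)
  have : CochainComplex.IsStrictlyLE (P.restriction e) (-N) :=
    (CochainComplex.isStrictlyLE_iff _ _).2 fun i hi => hN (-i) (by omega)
  have : CochainComplex.IsKProjective (P.restriction e) :=
    CochainComplex.isKProjective_of_projective _ (-N)
  have : QuasiIso (restrictionMap f e) := quasiIso_restrictionMap e
    ComplexShape.next_embeddingUpIntDownInt_f ComplexShape.prev_embeddingUpIntDownInt_f f
  rw [← (HomotopyCategory.cochainComplexEquivalence A).fullyFaithfulFunctor.bijective_comp_map_iff]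
  exact CochainComplex.IsKProjective.bijective_comp_quotient_map (K := P.restriction e)
    (restrictionMap f e)
end

section
/- Fix an integer n \ge 0 and a subset S of the open interval (0,1) of cardinality at most n. Let Y be the set of all sequences of real numbers 0 \le y_1 \le y_2 \le \dots \le y_n \le 1 such that S \subseteq \{y_1, \dots, y_n\}, regarded as a subspace of \mathbb{R}^n with the subspace topology. Then Y is a contractible topological space. -/
/-!
Let `s₁ < ⋯ < s_k` be the elements of `S`. The sequence `T = (s₁, …, s_k, 1, …, 1)` is the
greatest element of `Y`: in any `y ∈ Y` the values `s₁, …, s_j` occupy distinct positions, all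
before any position where `y` exceeds `s_j`. The homotopy `(t, y) ↦ y ⊔ (t ⊓ T)` stays in `Y`:
an entry `s > t` of `y` is untouched, and an entry `s ≤ t` is also an entry of `t ⊓ T`, and the
pointwise maximum of two monotone sequences taking the value `s` takes it as well. It runs from
the identity at `t = 0` to the constant `T` at `t = 1`.
-/

open Set

def monotoneSeqsCovering (ι : Type*) [Preorder ι] (S : Set ℝ) : Set (ι → ℝ) :=
  {y | Monotone y ∧ (∀ i, y i ∈ Icc (0 : ℝ) 1) ∧ S ⊆ range y}

lemma Monotone.mem_range_sup {ι α : Type*} [LinearOrder ι] [LinearOrder α] {y z : ι → α}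
    (hy : Monotone y) (hz : Monotone z) {s : α} (hsy : s ∈ range y) (hsz : s ∈ range z) :
    s ∈ range (y ⊔ z) := by
  obtain ⟨i, rfl⟩ := hsy
  obtain ⟨j, hj⟩ := hsz
  rcases le_total i j with hij | hji
  · exact ⟨i, sup_eq_left.mpr (hj ▸ hz hij)⟩
  · exact ⟨j, (sup_eq_right.mpr (hj ▸ hy hji)).trans hj⟩

/-- Otherwise the `j + 1` values `σ 0, …, σ j` would all be entries of `y` before position `i`. -/
lemma Monotone.le_of_range_subset {α : Type*} [LinearOrder α] {n k : ℕ} {y : Fin n → α}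
    (hy : Monotone y) {σ : Fin k → α} (hσ : StrictMono σ) (hrange : range σ ⊆ range y)
    {i : Fin n} {j : Fin k} (hij : (i : ℕ) ≤ j) : y i ≤ σ j := by
  by_contra! hlt
  choose w hw using fun l : Fin (j + 1) => hrange (mem_range_self (Fin.castLE j.isLt l))
  have hw_lt (l : Fin (j + 1)) : (w l : ℕ) < j := by
    have : y (w l) < y i := (hw l).symm ▸ (hσ.monotone (Fin.le_iff_val_le_val.mpr
      (Nat.le_of_lt_succ l.isLt))).trans_lt hlt
    exact (Fin.lt_def.mp (hy.reflect_lt this)).trans_le hij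
  have hinj : Function.Injective fun l => (⟨w l, hw_lt l⟩ : Fin j) := by
    intro l l' hll'
    have : w l = w l' := Fin.ext (Fin.mk.inj hll')
    have := (hw l).symm.trans (this ▸ hw l')
    exact Fin.castLE_injective _ (hσ.injective this)
  exact Nat.not_succ_le_self j (Fin.le_of_injective _ hinj)

noncomputable def paddedSort (s : Finset ℝ) (n : ℕ) (i : Fin n) : ℝ :=
  if h : (i : ℕ) < s.card then s.orderEmbOfFin rfl ⟨i, h⟩ else 1

lemma isGreatest_paddedSort {n : ℕ} {s : Finset ℝ} (hs : (s : Set ℝ) ⊆ Icc 0 1)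
    (hcard : s.card ≤ n) :
    IsGreatest (monotoneSeqsCovering (Fin n) s) (paddedSort s n) := by
  set σ := s.orderEmbOfFin rfl
  have hσ (j : Fin s.card) : σ j ∈ Icc (0 : ℝ) 1 := hs (s.orderEmbOfFin_mem rfl j)
  refine ⟨⟨?mono, ?unit, ?covers⟩, ?upper⟩
  case mono =>
    intro i i' hii'
    unfold paddedSort
    split_ifs with h h' h'
    · exact σ.monotone hii'
    · exact (hσ _).2
    · exact absurd ((Fin.le_def.mp hii').trans_lt h') h
    · rfl
  case unit =>
    intro i
    unfold paddedSort
    split_ifs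
    exacts [hσ _, ⟨zero_le_one, le_rfl⟩]
  case covers =>
    intro x hx
    obtain ⟨j, rfl⟩ : x ∈ range σ := by rwa [Finset.range_orderEmbOfFin]
    exact ⟨⟨j, j.isLt.trans_le hcard⟩, dif_pos j.isLt⟩
  case upper =>
    rintro y ⟨hy, hy01, hys⟩ i
    unfold paddedSort
    split_ifs with h
    · exact hy.le_of_range_subset σ.strictMono
        (by rwa [Finset.range_orderEmbOfFin]) le_rfl
    · exact (hy01 i).2

lemma sup_const_inf_mem_monotoneSeqsCovering {ι : Type*} [LinearOrder ι] {S : Set ℝ}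
    {y T : ι → ℝ} (hy : y ∈ monotoneSeqsCovering ι S) (hT : T ∈ monotoneSeqsCovering ι S)
    (c : ℝ) : y ⊔ (fun _ => c) ⊓ T ∈ monotoneSeqsCovering ι S := by
  obtain ⟨hy, hy01, hyS⟩ := hy
  obtain ⟨hT, hT01, hTS⟩ := hT
  have hcT : Monotone ((fun _ => c) ⊓ T) := monotone_const.inf hT
  refine ⟨hy.sup hcT, fun i => ⟨le_sup_of_le_left (hy01 i).1,
    sup_le (hy01 i).2 (inf_le_of_right_le (hT01 i).2)⟩, fun s hs => ?_⟩
  rcases le_or_gt s c with hsc | hcs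
  · -- `s` is an entry of `T` below the cutoff `c`, hence an entry of `c ⊓ T`.
    obtain ⟨j, hj⟩ := hTS hs
    exact hy.mem_range_sup hcT (hyS hs) ⟨j, by simp [hj, hsc]⟩
  · obtain ⟨i, hi⟩ := hyS hs
    exact ⟨i, by simp [hi, hcs.le.trans' inf_le_left]⟩

lemma contractibleSpace_of_isGreatest {ι : Type*} [LinearOrder ι] {S : Set ℝ} {T : ι → ℝ}
    (hT : IsGreatest (monotoneSeqsCovering ι S) T) :
    ContractibleSpace (monotoneSeqsCovering ι S) := by
  rw [contractible_iff_id_nullhomotopic]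
  refine ⟨⟨T, hT.1⟩, ⟨
    { toFun := fun q => ⟨q.2 ⊔ (fun _ => (q.1 : ℝ)) ⊓ T,
        sup_const_inf_mem_monotoneSeqsCovering q.2.2 hT.1 q.1⟩
      continuous_toFun := Continuous.subtype_mk (continuous_pi fun i =>
        ((continuous_apply i).comp (continuous_subtype_val.comp continuous_snd)).max
          ((continuous_subtype_val.comp continuous_fst).min continuous_const)) _
      map_zero_left := fun y => Subtype.ext <| sup_eq_left.mpr fun i =>
        inf_le_left.trans (y.2.2.1 i).1
      map_one_left := fun y => Subtype.ext <| by
        have hT1 : (fun _ => 1) ⊓ T = T := inf_eq_right.mpr fun i => (hT.1.2.1 i).2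
        simpa [hT1] using hT.2 y.2 }⟩⟩

/-- Fix `n ≥ 0` and a subset `S` of the open interval `(0, 1)` of cardinality at most `n`.
The space `Y` of weakly increasing sequences `0 ≤ y₁ ≤ ⋯ ≤ yₙ ≤ 1` whose set of entries
contains `S`, topologized as a subspace of `ℝⁿ`, is contractible. -/
theorem contractible_ordered_sequences_containing
    (n : ℕ) (S : Set ℝ) (hS : S ⊆ Set.Ioo (0 : ℝ) 1) (hfin : S.Finite) (hcard : S.ncard ≤ n) :
    ContractibleSpace
      {y : Fin n → ℝ // Monotone y ∧ (∀ i, y i ∈ Set.Icc (0 : ℝ) 1) ∧ S ⊆ Set.range y} := by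
  have hS' : (hfin.toFinset : Set ℝ) ⊆ Icc 0 1 := by
    simpa using hS.trans Ioo_subset_Icc_self
  have hcard' : hfin.toFinset.card ≤ n := by rwa [← Set.ncard_eq_toFinset_card S hfin]
  have := contractibleSpace_of_isGreatest (isGreatest_paddedSort hS' hcard')
  rwa [hfin.coe_toFinset] at this
end
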